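/- In the extended graph G' of a finite bipartite weighted graph with parts A, B, initial vertex s ∈ A and marked vertex t ∈ B, let v₀ = Σ_{e∈E} √(w_e) |e⟩. Then R_A(|ss'⟩ + v₀ − |t't⟩) = −|ss'⟩ − v₀ − |t't⟩ and R_B(−|ss'⟩ − v₀ − |t't⟩) = −|ss'⟩ + v₀ + |t't⟩; in particular, one step U = R_B R_A of the quantum walk maps |ss'⟩ + v₀ − |t't⟩ to −|ss'⟩ + v₀ + |t't⟩. -/

import Mathlib

/-!
**Statement 4.**
In the extended graph `G'` of a finite bipartite weighted graph with parts `A, B`,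
initial vertex `s ∈ A` and marked vertex `t ∈ B`, let `v₀ = ∑_{e ∈ E} √(w e) |e⟩`.
Then `R_A (|ss'⟩ + v₀ − |t't⟩) = −|ss'⟩ − v₀ − |t't⟩` and
`R_B (−|ss'⟩ − v₀ − |t't⟩) = −|ss'⟩ + v₀ + |t't⟩`; in particular one step `U = R_B R_A`
of the quantum walk maps `|ss'⟩ + v₀ − |t't⟩` to `−|ss'⟩ + v₀ + |t't⟩`.

The walk space is `EuclideanSpace ℂ (E ⊕ Bool)` (`Sum.inr false = ss'`, `Sum.inr true = t't`).
`R_A` is the unitary acting as `−1` on the span of the star states `{ψ_u : u ∈ A}` and as the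
identity on its orthogonal complement; it is specified here by these two defining properties
(and similarly for `R_B`).
-/

noncomputable section

namespace Stmt4

variable {V E : Type*} [Fintype V] [Fintype E] [DecidableEq V] [DecidableEq E]

def ket (x : E ⊕ Bool) : EuclideanSpace ℂ (E ⊕ Bool) := EuclideanSpace.single x 1

def psiA (endA : E → V) (w : E → ℝ) (s : V) (u : V) : EuclideanSpace ℂ (E ⊕ Bool) :=
  (∑ e ∈ Finset.univ.filter (fun e => endA e = u),
      ((Real.sqrt (w e) : ℂ) • ket (Sum.inl e))) +
    (if u = s then ket (Sum.inr false) else 0)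

def psiB (endB : E → V) (w : E → ℝ) (t : V) (u : V) : EuclideanSpace ℂ (E ⊕ Bool) :=
  (∑ e ∈ Finset.univ.filter (fun e => endB e = u),
      ((Real.sqrt (w e) : ℂ) • ket (Sum.inl e))) +
    (if u = t then ket (Sum.inr true) else 0)

/-- `v₀`, the weighted sum of the original edges. -/
def v₀ (w : E → ℝ) : EuclideanSpace ℂ (E ⊕ Bool) :=
  ∑ e : E, ((Real.sqrt (w e) : ℂ) • ket (Sum.inl e))

/-!
Every edge of `E` has exactly one endpoint in `A`, so the star states of `A` sum to
`v₀ + |ss'⟩`, which `R_A` therefore negates, while `|t't⟩` is orthogonal to every star state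
of `A` and is fixed by `R_A`. Symmetrically, the star states of `B` sum to `v₀ + |t't⟩`, which
`R_B` negates, and `R_B` fixes `|ss'⟩`.
-/

theorem map_sum_eq_neg_sum {R M ι : Type*} [Semiring R] [AddCommGroup M] [Module R M]
    (f : M →ₗ[R] M) (S : Finset ι) (ψ : ι → M) (h : ∀ i ∈ S, f (ψ i) = -ψ i) :
    f (∑ i ∈ S, ψ i) = -∑ i ∈ S, ψ i := by
  rw [map_sum, ← Finset.sum_neg_distrib]
  exact Finset.sum_congr rfl h

theorem sum_fiberwise_add_ite {ι κ M : Type*} [Fintype ι] [DecidableEq κ] [AddCommMonoid M]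
    (S : Finset κ) (π : ι → κ) (hπ : ∀ i, π i ∈ S) (f : ι → M) {s : κ} (hs : s ∈ S)
    (m : M) :
    ∑ k ∈ S, ((∑ i ∈ Finset.univ.filter (fun i => π i = k), f i) + if k = s then m else 0)
      = ∑ i, f i + m := by
  rw [Finset.sum_add_distrib, Finset.sum_fiberwise_of_maps_to fun i _ => hπ i,
    Finset.sum_ite_eq' S s, if_pos hs]

theorem walk_step_on_edge_sum
    (A B : Finset V)
    (endA endB : E → V) (hA : ∀ e, endA e ∈ A) (hB : ∀ e, endB e ∈ B)
    (w : E → ℝ)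
    (s t : V) (hs : s ∈ A) (ht : t ∈ B)
    (RA RB : EuclideanSpace ℂ (E ⊕ Bool) →ₗ[ℂ] EuclideanSpace ℂ (E ⊕ Bool))
    (hRAneg : ∀ u ∈ A, RA (psiA endA w s u) = -psiA endA w s u)
    (hRAid : ∀ x, (∀ u ∈ A, (inner ℂ (psiA endA w s u) x : ℂ) = 0) → RA x = x)
    (hRBneg : ∀ u ∈ B, RB (psiB endB w t u) = -psiB endB w t u)
    (hRBid : ∀ x, (∀ u ∈ B, (inner ℂ (psiB endB w t u) x : ℂ) = 0) → RB x = x) :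
    RA (ket (Sum.inr false) + v₀ w - ket (Sum.inr true))
        = -ket (Sum.inr false) - v₀ w - ket (Sum.inr true) ∧
    RB (-ket (Sum.inr false) - v₀ w - ket (Sum.inr true))
        = -ket (Sum.inr false) + v₀ w + ket (Sum.inr true) ∧
    RB (RA (ket (Sum.inr false) + v₀ w - ket (Sum.inr true)))
        = -ket (Sum.inr false) + v₀ w + ket (Sum.inr true) := by
  have hsumA : ∑ u ∈ A, psiA endA w s u = v₀ w + ket (Sum.inr false) :=
    sum_fiberwise_add_ite A endA hA _ hs _
  have hsumB : ∑ u ∈ B, psiB endB w t u = v₀ w + ket (Sum.inr true) :=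
    sum_fiberwise_add_ite B endB hB _ ht _
  have hRA_fix : RA (ket (Sum.inr true)) = ket (Sum.inr true) :=
    hRAid _ fun u _ => by unfold psiA; split_ifs <;> simp [ket, EuclideanSpace.inner_single_right]
  have hRB_fix : RB (ket (Sum.inr false)) = ket (Sum.inr false) :=
    hRBid _ fun u _ => by unfold psiB; split_ifs <;> simp [ket, EuclideanSpace.inner_single_right]
  have hstepA : RA (ket (Sum.inr false) + v₀ w - ket (Sum.inr true))
      = -ket (Sum.inr false) - v₀ w - ket (Sum.inr true) := by
    rw [add_comm (ket _), ← hsumA, map_sub, map_sum_eq_neg_sum RA A _ hRAneg, hRA_fix, hsumA]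
    abel
  have hstepB : RB (-ket (Sum.inr false) - v₀ w - ket (Sum.inr true))
      = -ket (Sum.inr false) + v₀ w + ket (Sum.inr true) := by
    rw [sub_sub, ← hsumB, map_sub, map_neg, hRB_fix,
      map_sum_eq_neg_sum RB B _ hRBneg, hsumB]
    abel
  exact ⟨hstepA, hstepB, by rw [hstepA, hstepB]⟩

end Stmt4
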